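/- arXiv:math/0401301 — 5 statements merged into one kernel-verified Lean document; each statement's English description precedes it below -/
import Mathlib

section
/- Let P be a subfield of ℂ and a₁,…,a_{r+1} ∈ ℂ^×. If the tuple {a₁,…,a_r,a_{r+1}} is simple in the field P(a₁,…,a_{r+1}), then the tuple {a₁,…,a_r} is simple in the field P(a₁,…,a_r). -/
noncomputable section

/-- The subfield of `ℂ` generated by the set `s` over the subfield `P`. -/
def SF (P : Subfield ℂ) (s : Set ℂ) : Subfield ℂ := Subfield.closure ((P : Set ℂ) ∪ s)

/-- Multiplicative independence of a tuple of units of `ℂ`. -/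
def MultIndep {k : ℕ} (a : Fin k → ℂˣ) : Prop :=
  ∀ n : Fin k → ℤ, (∏ i, a i ^ n i) = 1 → ∀ i, n i = 0

/-- The tuple `a` is simple in the subfield `K` of `ℂ`: its members lie in `K`, it is
multiplicatively independent, and the subgroup it generates is pure in `Kˣ`. -/
def IsSimpleIn {k : ℕ} (K : Subfield ℂ) (a : Fin k → ℂˣ) : Prop :=
  (∀ i, (a i : ℂ) ∈ K) ∧ MultIndep a ∧
  ∀ (n : ℕ), 0 < n → ∀ b ∈ Subgroup.closure (Set.range a),
    (∃ x : ℂˣ, (x : ℂ) ∈ K ∧ x ^ n = b) →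
    ∃ y ∈ Subgroup.closure (Set.range a), y ^ n = b

/-- In a commutative group, every element of the closure of the range of a finite tuple
is a product of integer powers of the tuple's members. -/
lemma mem_closure_range_exists {G : Type*} [CommGroup G] {k : ℕ} {a : Fin k → G} {x : G}
    (hx : x ∈ Subgroup.closure (Set.range a)) : ∃ m : Fin k → ℤ, ∏ i, a i ^ m i = x := by
  induction hx using Subgroup.closure_induction with
  | mem z hz =>
    obtain ⟨i, rfl⟩ := hz
    refine ⟨Pi.single i 1, ?_⟩
    rw [Finset.prod_eq_single i]
    · simp
    · intro j _ hj; simp [Pi.single_eq_of_ne hj]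
    · simp
  | one => exact ⟨0, by simp⟩
  | mul x y _ _ ihx ihy =>
    obtain ⟨m, rfl⟩ := ihx
    obtain ⟨m', rfl⟩ := ihy
    exact ⟨m + m', by simp [zpow_add, Finset.prod_mul_distrib]⟩
  | inv x _ ih =>
    obtain ⟨m, rfl⟩ := ih
    exact ⟨-m, by simp [zpow_neg]⟩

/-- If `{a₁,…,a_{r+1}}` is simple in `P(a₁,…,a_{r+1})` then `{a₁,…,a_r}`
is simple in `P(a₁,…,a_r)`. -/
theorem simple_of_simple_extension
    (P : Subfield ℂ) (r : ℕ) (a : Fin (r + 1) → ℂˣ)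
    (h : IsSimpleIn (SF P (Set.range fun i : Fin (r + 1) => (a i : ℂ))) a) :
    IsSimpleIn (SF P (Set.range fun i : Fin r => (a i.castSucc : ℂ)))
      (fun i : Fin r => a i.castSucc) := by
  obtain ⟨hmem, hindep, hpure⟩ := h
  have hsub : (Set.range fun i : Fin r => (a i.castSucc : ℂ)) ⊆
      Set.range fun i : Fin (r + 1) => (a i : ℂ) := by
    rintro z ⟨i, rfl⟩; exact ⟨i.castSucc, rfl⟩
  have hK : SF P (Set.range fun i : Fin r => (a i.castSucc : ℂ)) ≤
      SF P (Set.range fun i : Fin (r + 1) => (a i : ℂ)) :=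
    Subfield.closure_mono (Set.union_subset_union_right _ hsub)
  have hsubG : (Set.range fun i : Fin r => a i.castSucc) ⊆ Set.range a := by
    rintro z ⟨i, rfl⟩; exact ⟨i.castSucc, rfl⟩
  refine ⟨fun i => Subfield.subset_closure (Or.inr ⟨i, rfl⟩), ?_, ?_⟩
  · -- multiplicative independence
    intro n hn i
    have := hindep (Fin.snoc n 0) ?_ i.castSucc
    · simpa using this
    · rw [Fin.prod_univ_castSucc]
      simp [Fin.snoc_castSucc, hn]
  · -- purity
    intro n hn b hb hx
    obtain ⟨x, hxK, hxn⟩ := hx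
    have hb' : b ∈ Subgroup.closure (Set.range a) :=
      Subgroup.closure_mono hsubG hb
    obtain ⟨y, hy, hyn⟩ := hpure n hn b hb' ⟨x, hK hxK, hxn⟩
    obtain ⟨m, rfl⟩ := mem_closure_range_exists hy
    obtain ⟨kk, rfl⟩ := mem_closure_range_exists hb
    -- Show the last exponent of y vanishes.
    have key : ∀ i, m i * (n : ℤ) - (Fin.snoc kk 0 : Fin (r + 1) → ℤ) i = 0 := by
      apply hindep
      have h1 : (∏ i, a i ^ m i) ^ (n : ℤ) = ∏ i, a i ^ (m i * (n : ℤ)) := by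
        rw [← Finset.prod_zpow]
        exact Finset.prod_congr rfl fun i _ => (zpow_mul _ _ _).symm
      have h2 : (∏ i : Fin r, a i.castSucc ^ kk i) =
          ∏ i, a i ^ (Fin.snoc kk 0 : Fin (r + 1) → ℤ) i := by
        rw [Fin.prod_univ_castSucc]
        simp [Fin.snoc_castSucc]
      calc ∏ i, a i ^ (m i * (n : ℤ) - (Fin.snoc kk 0 : Fin (r + 1) → ℤ) i)
          = (∏ i, a i ^ (m i * (n : ℤ))) * (∏ i, a i ^ (Fin.snoc kk 0 : Fin (r + 1) → ℤ) i)⁻¹ := by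
            simp [zpow_sub, Finset.prod_mul_distrib, Finset.prod_inv_distrib]
        _ = (∏ i, a i ^ m i) ^ (n : ℤ) * ((∏ i : Fin r, a i.castSucc ^ kk i))⁻¹ := by
            rw [h1, h2]
        _ = 1 := by
            rw [← zpow_natCast _ n] at hyn
            rw [hyn]; group
    have hlast : m (Fin.last r) = 0 := by
      have := key (Fin.last r)
      simp only [Fin.snoc_last, sub_zero, mul_eq_zero] at this
      rcases this with h | h
      · exact h
      · omega
    have hysplit : (∏ i, a i ^ m i) = ∏ i : Fin r, a i.castSucc ^ m i.castSucc := by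
      rw [Fin.prod_univ_castSucc, hlast]
      simp
    refine ⟨∏ i, a i ^ m i, ?_, hyn⟩
    rw [hysplit]
    exact Subgroup.prod_mem _ fun i _ =>
      Subgroup.zpow_mem _ (Subgroup.subset_closure (Set.mem_range_self i)) _
end
end

section
/- Let P be a subfield of ℂ, C = P^× ∩ μ, a ∈ P nonzero, and k > 1 an integer. Then the following are equivalent: (i) a is k-simple in P; (ii) for every divisor m > 1 of k there is no α ∈ P and root of unity ε with a = α^m·ε; (iii) for every divisor m > 1 of k the image of a in the quotient group P^×/C has no m-th root in P^×/C. -/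
noncomputable section

/-- `x` is a root of unity in `ℂ`. -/
def IsRootOfUnity (x : ℂ) : Prop := ∃ n : ℕ, 0 < n ∧ x ^ n = 1

/-- `a` is `k`-simple in the subfield `P` of `ℂ` (for `k > 1`): `a ∈ P`, `a` is not a
root of unity, and `a ^ d = b ^ k * ε` with `b ∈ P`, `ε` a root of unity, `d ∈ ℤ`
implies `k ∣ d`. -/
def IsKSimple (P : Subfield ℂ) (k : ℕ) (a : ℂ) : Prop :=
  a ∈ P ∧ a ≠ 0 ∧ ¬ IsRootOfUnity a ∧
  ∀ (b ε : ℂ) (d : ℤ), b ∈ P → IsRootOfUnity ε →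
    a ^ d = b ^ (k : ℤ) * ε → (k : ℤ) ∣ d

/-!
In the torsion-free group `Pˣ / C`, condition (ii) says exactly that the class `x` of `a` is not an
`m`-th power, and `k`-simplicity says that `x ^ d` is a `k`-th power only when `k ∣ d`. If
`x = y ^ m` with `k = m n`, then `x ^ n = y ^ k` although `k ∤ n`. Conversely, if `x ^ d = y ^ k`,
put `g = gcd d k = d u + k v` (Bézout): then `z = y ^ u * x ^ v` has `z ^ k = x ^ g`, so
`(z ^ (k / g)) ^ g = x ^ g`, and torsion-freeness gives `x = z ^ (k / g)`; hence `g = k`.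
-/

section TorsionFree

variable {G : Type*} [CommGroup G] [IsMulTorsionFree G]

theorem exists_pow_eq_of_pow_eq_zpow {x y : G} {k m : ℕ} {d : ℤ} (h : y ^ k = x ^ d)
    (hk : k ≠ 0) (hkm : k = Int.gcd d k * m) : ∃ z : G, z ^ m = x := by
  set g := Int.gcd d k
  have hg : g ≠ 0 := (Int.gcd_pos_of_ne_zero_right d (by exact_mod_cast hk)).ne'
  refine ⟨y ^ Int.gcdA d k * x ^ Int.gcdB d k, pow_left_injective hg ?_⟩
  dsimp only
  calc ((y ^ Int.gcdA d k * x ^ Int.gcdB d k) ^ m) ^ g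
      = (y ^ (k : ℤ)) ^ Int.gcdA d k * x ^ ((k : ℤ) * Int.gcdB d k) := by
        rw [← pow_mul, mul_comm m, ← hkm, mul_pow, ← zpow_natCast, ← zpow_natCast,
          ← zpow_mul, ← zpow_mul, ← zpow_mul]
        congr 2 <;> ring
    _ = x ^ g := by
        rw [zpow_natCast, h, ← zpow_mul, ← zpow_add, ← zpow_natCast, Int.gcd_eq_gcd_ab]

theorem forall_dvd_of_pow_eq_zpow_iff (x : G) {k : ℕ} (hk : k ≠ 0) :
    (∀ d : ℤ, (∃ y : G, y ^ k = x ^ d) → (k : ℤ) ∣ d) ↔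
      ∀ m : ℕ, 1 < m → m ∣ k → ¬ ∃ y : G, y ^ m = x := by
  constructor
  · rintro h m hm ⟨n, rfl⟩ ⟨y, rfl⟩
    have hn : n ≠ 0 := by rintro rfl; simp at hk
    have hdvd : m * n ∣ n := by exact_mod_cast h n ⟨y, by rw [zpow_natCast, ← pow_mul]⟩
    have hle := Nat.le_of_dvd (Nat.pos_of_ne_zero hn) hdvd
    nlinarith [Nat.pos_of_ne_zero hn]
  · intro h d ⟨y, hy⟩
    by_contra hkd
    obtain ⟨m, hkm⟩ : Int.gcd d k ∣ k := by exact_mod_cast Int.gcd_dvd_right d k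
    have hm1 : m ≠ 1 := by
      rintro rfl
      rw [mul_one] at hkm
      exact hkd (hkm ▸ Int.gcd_dvd_left d k)
    have hm0 : m ≠ 0 := by rintro rfl; exact hk hkm
    exact h m (by omega) (Dvd.intro_left _ hkm.symm) (exists_pow_eq_of_pow_eq_zpow hy hk hkm)

end TorsionFree

theorem isRootOfUnity_iff_isOfFinOrder (x : ℂ) : IsRootOfUnity x ↔ IsOfFinOrder x :=
  isOfFinOrder_iff_pow_eq_one.symm

section Subfield

variable {P : Subfield ℂ}

open QuotientGroup CommGroup

theorem isRootOfUnity_coe_iff_mem_torsion (u : (↥P)ˣ) :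
    IsRootOfUnity ((u : ↥P) : ℂ) ↔ u ∈ torsion (↥P)ˣ := by
  rw [isRootOfUnity_iff_isOfFinOrder, mem_torsion, ← Units.isOfFinOrder_val]
  exact Subtype.coe_injective.isOfFinOrder_iff (f := P.subtype.toMonoidHom)

theorem mk_pow_eq_mk_iff_isRootOfUnity (w u : (↥P)ˣ) (n : ℕ) :
    (mk w : (↥P)ˣ ⧸ torsion (↥P)ˣ) ^ n = mk u ↔
      IsRootOfUnity ((((w : ↥P) : ℂ) ^ n)⁻¹ * ((u : ↥P) : ℂ)) := by
  rw [← mk_pow, QuotientGroup.eq, ← isRootOfUnity_coe_iff_mem_torsion]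
  push_cast
  rfl

theorem exists_pow_eq_mk_iff (u : (↥P)ˣ) {n : ℕ} (hn : n ≠ 0) :
    (∃ y : (↥P)ˣ ⧸ torsion (↥P)ˣ, y ^ n = mk u) ↔
      ∃ α ε : ℂ, α ∈ P ∧ IsRootOfUnity ε ∧ ((u : ↥P) : ℂ) = α ^ n * ε := by
  constructor
  · rintro ⟨y, hy⟩
    obtain ⟨w, rfl⟩ := mk_surjective y
    refine ⟨_, _, (w : ↥P).2, (mk_pow_eq_mk_iff_isRootOfUnity w u n).1 hy, ?_⟩
    rw [mul_inv_cancel_left₀ (by simp)]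
  · rintro ⟨α, ε, hα, hε, hu⟩
    have hα0 : (⟨α, hα⟩ : ↥P) ≠ 0 := by
      rintro ⟨⟩
      simp [zero_pow hn] at hu
    refine ⟨mk (Units.mk0 _ hα0), (mk_pow_eq_mk_iff_isRootOfUnity _ u n).2 ?_⟩
    rwa [Units.val_mk0, hu, inv_mul_cancel_left₀ (pow_ne_zero n (by exact_mod_cast hα0))]

theorem isKSimple_iff_forall_dvd_of_pow_eq_mk_zpow (a : (↥P)ˣ) {k : ℕ} (hk : 1 < k) :
    IsKSimple P k ((a : ↥P) : ℂ) ↔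
      ∀ d : ℤ, (∃ y : (↥P)ˣ ⧸ torsion (↥P)ˣ, y ^ k = mk a ^ d) → (k : ℤ) ∣ d := by
  have hpow (d : ℤ) : (∃ y : (↥P)ˣ ⧸ torsion (↥P)ˣ, y ^ k = mk a ^ d) ↔
      ∃ b ε : ℂ, b ∈ P ∧ IsRootOfUnity ε ∧ ((a : ↥P) : ℂ) ^ d = b ^ (k : ℤ) * ε := by
    rw [← mk_zpow, exists_pow_eq_mk_iff _ (by omega), Units.val_zpow_eq_zpow_val,
      ← P.coe_subtype, map_zpow₀]
    simp only [zpow_natCast, P.coe_subtype]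
  constructor
  · rintro ⟨-, -, -, hsimple⟩ d hd
    obtain ⟨b, ε, hb, hε, hd⟩ := (hpow d).1 hd
    exact hsimple b ε d hb hε hd
  · intro h
    refine ⟨(a : ↥P).2, by simp, fun hroot => ?_,
      fun b ε d hb hε hd => h d ((hpow d).2 ⟨b, ε, hb, hε, hd⟩)⟩
    have hdvd : (k : ℤ) ∣ 1 := h 1 ⟨1, by
      rw [one_pow, zpow_one, eq_comm, eq_one_iff, ← isRootOfUnity_coe_iff_mem_torsion]
      exact hroot⟩
    have hle := Nat.le_of_dvd one_pos (by exact_mod_cast hdvd)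
    omega

end Subfield

/-- For `a ∈ Pˣ` and `k > 1` the following are equivalent:
(i) `a` is `k`-simple in `P`;
(ii) for every divisor `m > 1` of `k` there are no `α ∈ P` and root of unity `ε` with
`a = α ^ m * ε`;
(iii) for every divisor `m > 1` of `k` the image of `a` in `Pˣ/C`, `C = Pˣ ∩ μ` the
torsion subgroup, has no `m`-th root. -/
theorem ksimple_tfae
    (P : Subfield ℂ) (a : (↥P)ˣ) (k : ℕ) (hk : 1 < k) :
    (IsKSimple P k ((a : ↥P) : ℂ) ↔
      (∀ m : ℕ, 1 < m → m ∣ k →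
        ¬ ∃ α ε : ℂ, α ∈ P ∧ IsRootOfUnity ε ∧ ((a : ↥P) : ℂ) = α ^ m * ε)) ∧
    (IsKSimple P k ((a : ↥P) : ℂ) ↔
      (∀ m : ℕ, 1 < m → m ∣ k →
        ¬ ∃ y : (↥P)ˣ ⧸ CommGroup.torsion (↥P)ˣ,
          y ^ m = (QuotientGroup.mk a : (↥P)ˣ ⧸ CommGroup.torsion (↥P)ˣ))) := by
  have hquot := (isKSimple_iff_forall_dvd_of_pow_eq_mk_zpow a hk).trans
    (forall_dvd_of_pow_eq_zpow_iff
      (QuotientGroup.mk a : (↥P)ˣ ⧸ CommGroup.torsion (↥P)ˣ) (by omega))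
  refine ⟨hquot.trans ?_, hquot⟩
  refine forall_congr' fun m => imp_congr_right fun hm => imp_congr_right fun _ => ?_
  exact not_congr (exists_pow_eq_mk_iff a (by omega))
end
end

section
/- Let P be a subfield of ℂ, q a prime number, and ε ∈ ℂ a root of unity of order q. If a ∈ P is q-simple in P, then a is q-simple in P(ε). -/
/-! Write `m = [P(ε) : P]`. Since `ε` is a root of the cyclotomic polynomial `Φ_q`, `m ≤ q - 1`,
so `m` is prime to `q`. Taking the norm from `P(ε)` to `P` turns a relation `a ^ d = b ^ q * η`
in `P(ε)` into `a ^ (m * d) = N(b) ^ q * N(η)` in `P`, with `N(η)` again a root of unity;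
`q`-simplicity of `a` in `P` gives `q ∣ m * d`, hence `q ∣ d`. -/

noncomputable section

open IntermediateField Module Polynomial

theorem SF_eq_adjoin_toSubfield (P : Subfield ℂ) (s : Set ℂ) :
    SF P s = (adjoin P s).toSubfield := by
  rw [SF, adjoin_toSubfield]
  congr
  exact Subtype.range_coe.symm

theorem IsPrimitiveRoot.aeval_cyclotomic {K L : Type*} [Field K] [Field L] [Algebra K L]
    {ζ : L} {n : ℕ} (hn : 0 < n) (hζ : IsPrimitiveRoot ζ n) : aeval ζ (cyclotomic n K) = 0 := by
  rw [aeval_def, eval₂_eq_eval_map, map_cyclotomic]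
  exact hζ.isRoot_cyclotomic hn

theorem IsPrimitiveRoot.finrank_adjoin_le_totient {K L : Type*} [Field K] [Field L]
    [Algebra K L] {ζ : L} {n : ℕ} (hn : 0 < n) (hζ : IsPrimitiveRoot ζ n) :
    finrank K K⟮ζ⟯ ≤ n.totient := by
  rw [adjoin.finrank ((hζ.isIntegral hn).tower_top), ← natDegree_cyclotomic n K]
  exact natDegree_le_of_dvd (minpoly.dvd K ζ (hζ.aeval_cyclotomic hn)) (cyclotomic_ne_zero n K)

theorem IsRootOfUnity.norm {P : Subfield ℂ} {E : IntermediateField P ℂ} [FiniteDimensional P E]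
    {η : E} (hη : IsRootOfUnity η) : IsRootOfUnity (Algebra.norm P η : P) := by
  obtain ⟨n, hn, hηn⟩ := hη
  refine ⟨n, hn, ?_⟩
  have : η ^ n = 1 := Subtype.ext (by simpa using hηn)
  simpa using congrArg (fun x : P => (x : ℂ)) (congrArg (Algebra.norm P) this)

theorem IsKSimple.of_coprime_finrank {P : Subfield ℂ} {k : ℕ} {a : ℂ}
    (E : IntermediateField P ℂ) [FiniteDimensional P E] (hk : k.Coprime (finrank P E))
    (ha : IsKSimple P k a) : IsKSimple E.toSubfield k a := by
  obtain ⟨haP, ha0, ha_root, ha_dvd⟩ := ha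
  refine ⟨E.algebraMap_mem ⟨a, haP⟩, ha0, ha_root, fun b η d hb hη had => ?_⟩
  have hbk : b ^ (k : ℤ) ≠ 0 := fun h => zpow_ne_zero d ha0 (by rw [had, h, zero_mul])
  have hηE : η ∈ E := by
    have : η = a ^ d * (b ^ (k : ℤ))⁻¹ := by rw [had]; field_simp
    rw [this]
    exact mul_mem (zpow_mem (E.algebraMap_mem ⟨a, haP⟩) d) (inv_mem (zpow_mem hb _))
  have hE : (algebraMap P E ⟨a, haP⟩) ^ d = (⟨b, hb⟩ : E) ^ (k : ℤ) * ⟨η, hηE⟩ :=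
    E.val.injective (by rwa [map_mul, map_zpow₀, map_zpow₀])
  have hP := congrArg (Algebra.norm P) hE
  rw [Algebra.norm_zpow, map_mul, Algebra.norm_zpow, Algebra.norm_algebraMap, ← zpow_natCast,
    ← zpow_mul] at hP
  have hdvd : (k : ℤ) ∣ finrank P E * d :=
    ha_dvd _ _ _ (Algebra.norm P _).2 (IsRootOfUnity.norm (η := ⟨η, hηE⟩) hη)
      (by simpa [map_zpow₀ P.subtype] using congrArg P.subtype hP)
  exact (Nat.isCoprime_iff_coprime.2 hk).dvd_of_dvd_mul_left hdvd

/-- If `q` is prime, `ε` a root of unity of order `q`, and `a ∈ P` is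
`q`-simple in `P`, then `a` is `q`-simple in `P(ε)`. -/
theorem ksimple_adjoin_prime_root
    (P : Subfield ℂ) (q : ℕ) (hq : q.Prime)
    (ε : ℂ) (hε : IsPrimitiveRoot ε q)
    (a : ℂ) (ha : IsKSimple P q a) :
    IsKSimple (SF P {ε}) q a := by
  have : FiniteDimensional P P⟮ε⟯ := adjoin.finiteDimensional ((hε.isIntegral hq.pos).tower_top)
  have hdeg : finrank P P⟮ε⟯ < q :=
    (hε.finrank_adjoin_le_totient hq.pos).trans_lt (Nat.totient_lt q hq.one_lt)
  have hcop : q.Coprime (finrank P P⟮ε⟯) :=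
    Nat.coprime_of_lt_prime finrank_pos.ne' hdeg hq
  rw [SF_eq_adjoin_toSubfield]
  exact ha.of_coprime_finrank P⟮ε⟯ hcop
end
end

section
/- Let R ⊆ ℂ be a field containing a primitive root of unity of order n, let {a₁,…,a_r} ⊆ R be simple in R, and let α₁,…,α_r ∈ ℂ satisfy α_i^n = a_i for 1 ≤ i ≤ r. Then the Galois group of R(α₁,…,α_r) over R is isomorphic to (ℤ/nℤ)^r, the r-th Cartesian power of the cyclic group of order n. In particular, for any other roots α'₁,…,α'_r ∈ ℂ with (α'_i)^n = a_i for each i, there is a field automorphism of R(α₁,…,α_r, α'₁,…,α'_r) fixing R pointwise and sending α_i to α'_i for each i. -/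
noncomputable section

/-- The Galois group of `K` over `R`: the group of field automorphisms of `K` fixing
the elements of `R` pointwise (as a subgroup of the group of ring automorphisms). -/
def galFix (R K : Subfield ℂ) : Subgroup (↥K ≃+* ↥K) where
  carrier := {σ | ∀ x : ↥K, (x : ℂ) ∈ R → σ x = x}
  one_mem' := fun _ _ => rfl
  mul_mem' := by
    intro σ τ hσ hτ x hx
    show σ (τ x) = x
    rw [hτ x hx]
    exact hσ x hx
  inv_mem' := by
    intro σ hσ x hx
    show σ.symm x = x
    apply σ.injective
    rw [RingEquiv.apply_symm_apply, hσ x hx]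


/-!
Kummer theory. Put `K = R(α₁,…,α_r)`. Since `R` contains the `n`-th roots of unity, `K/R` is
Galois and `σ ↦ (σ αᵢ / αᵢ)ᵢ` is an injective homomorphism `Gal(K/R) → μₙʳ`. It is onto by
counting: for exponent vectors `v ∈ [0, n)ʳ` the characters `σ ↦ σ(αᵛ) / αᵛ` of `Gal(K/R)` are
pairwise distinct, since a quotient `αᵛ / αʷ` fixed by the whole Galois group lies in `R`, and
simplicity of the `aᵢ` forces `v ≡ w (mod n)`. Dedekind's independence of characters then gives
`nʳ ≤ |Gal(K/R)|`.
-/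

open IntermediateField Polynomial

section Kummer

variable {F K : Type*} [Field F] [Field K] [Algebra F K] {ι : Type*} {α : ι → Kˣ}

lemma AlgEquiv.eq_one_of_forall_apply_eq {S : Set K} (hgen : adjoin F S = ⊤)
    (hS : ∀ x ∈ S, IsAlgebraic F x) {σ : K ≃ₐ[F] K} (hσ : ∀ x ∈ S, σ x = x) : σ = 1 := by
  have htop : Algebra.adjoin F S = ⊤ := by
    rw [← adjoin_toSubalgebra_of_isAlgebraic hS, hgen, top_toSubalgebra]
  have := AlgHom.ext_of_adjoin_eq_top htop (φ₁ := (σ : K →ₐ[F] K)) (φ₂ := AlgHom.id F K) hσ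
  exact AlgEquiv.ext fun x => DFunLike.congr_fun this x

def kummerChar (σ : K ≃ₐ[F] K) : Kˣ →* Kˣ := Units.map (σ : K →* K) / MonoidHom.id Kˣ

lemma kummerChar_apply (σ : K ≃ₐ[F] K) (x : Kˣ) : (kummerChar σ x : K) = σ x / x := by
  simp [kummerChar]

lemma kummerChar_eq_one_iff {σ : K ≃ₐ[F] K} {x : Kˣ} : kummerChar σ x = 1 ↔ σ x = x := by
  rw [← Units.val_inj, kummerChar_apply, Units.val_one, div_eq_one_iff_eq x.ne_zero]

variable {n : ℕ}

variable (F n) in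
/-- Together with `αᵢⁿ ∈ F`, this says that the classes of the `αᵢ` generate a copy of
`(ℤ/nℤ)^ι` in `Kˣ/Fˣ`. -/
def IsKummerIndependent [Fintype ι] (α : ι → Kˣ) : Prop :=
  ∀ v : ι → ℤ, ((∏ i, α i ^ v i : Kˣ) : K) ∈ (⊥ : IntermediateField F K) → ∀ i, (n : ℤ) ∣ v i

lemma kummerChar_mem_rootsOfUnity {x : Kˣ} (hx : (x : K) ^ n ∈ (⊥ : IntermediateField F K))
    (σ : K ≃ₐ[F] K) : kummerChar σ x ∈ rootsOfUnity n K := by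
  obtain ⟨c, hc⟩ := mem_bot.mp hx
  rw [mem_rootsOfUnity, ← Units.val_inj, Units.val_pow_eq_pow_val, kummerChar_apply, div_pow,
    ← map_pow, ← hc, σ.commutes, hc, Units.val_one, div_self (pow_ne_zero _ x.ne_zero)]

lemma prod_zpow_pow_mem_bot [Fintype ι] (hα : ∀ i, (α i : K) ^ n ∈ (⊥ : IntermediateField F K))
    (v : ι → ℤ) : ((∏ i, α i ^ v i : Kˣ) : K) ^ n ∈ (⊥ : IntermediateField F K) := by
  simp_rw [Units.coe_prod, Units.val_zpow_eq_zpow_val, ← Finset.prod_pow, ← zpow_natCast,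
    ← zpow_mul, mul_comm _ (n : ℤ), zpow_mul, zpow_natCast]
  exact prod_mem fun i _ => zpow_mem (hα i) _

lemma dvd_sub_of_forall_kummerChar_prod_eq [Fintype ι] [IsGalois F K] [FiniteDimensional F K]
    (hind : IsKummerIndependent F n α) {v w : ι → ℤ}
    (h : ∀ σ : K ≃ₐ[F] K, kummerChar σ (∏ i, α i ^ v i) = kummerChar σ (∏ i, α i ^ w i))
    (i : ι) : (n : ℤ) ∣ v i - w i := by
  refine hind (v - w) ?_ i
  refine (IsGalois.mem_bot_iff_fixed (F := F) _).mpr fun σ => kummerChar_eq_one_iff.mp ?_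
  have : ∏ i, α i ^ (v - w) i = (∏ i, α i ^ v i) / ∏ i, α i ^ w i := by
    rw [← Finset.prod_div_distrib]
    exact Finset.prod_congr rfl fun i _ => zpow_sub _ _ _
  rw [this, _root_.map_div, h σ, div_self']

variable [NeZero n]

lemma isIntegral_of_pow_mem_bot {x : K} (hx : x ^ n ∈ (⊥ : IntermediateField F K)) :
    IsIntegral F x := by
  obtain ⟨c, hc⟩ := mem_bot.mp hx
  exact IsIntegral.of_pow (NeZero.pos n) (hc ▸ isIntegral_algebraMap)

lemma finiteDimensional_adjoin_range [Finite ι]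
    (hα : ∀ i, (α i : K) ^ n ∈ (⊥ : IntermediateField F K)) :
    FiniteDimensional F (adjoin F (Set.range fun i => (α i : K))) :=
  finiteDimensional_adjoin (by rintro _ ⟨i, rfl⟩; exact isIntegral_of_pow_mem_bot (hα i))

lemma finiteDimensional_of_adjoin_eq_top [Finite ι]
    (hα : ∀ i, (α i : K) ^ n ∈ (⊥ : IntermediateField F K))
    (hgen : adjoin F (Set.range fun i => (α i : K)) = ⊤) : FiniteDimensional F K := by
  have := finiteDimensional_adjoin_range hα
  rw [hgen] at this
  exact topEquiv.toLinearEquiv.finiteDimensional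

variable {ζ : F} (hζ : IsPrimitiveRoot ζ n)
include hζ

lemma AlgEquiv.apply_eq_self_of_pow_eq_one (σ : K ≃ₐ[F] K) {z : K} (hz : z ^ n = 1) :
    σ z = z := by
  obtain ⟨i, -, rfl⟩ := (hζ.map_of_injective (algebraMap F K).injective).eq_pow_of_pow_eq_one hz
  rw [map_pow, σ.commutes]

lemma kummerChar_mul {x : Kˣ} (hx : (x : K) ^ n ∈ (⊥ : IntermediateField F K))
    (σ τ : K ≃ₐ[F] K) : kummerChar (σ * τ) x = kummerChar σ x * kummerChar τ x := by
  have hfix : σ (kummerChar τ x) = kummerChar τ x :=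
    AlgEquiv.apply_eq_self_of_pow_eq_one hζ σ <| by
      rw [← Units.val_pow_eq_pow_val, (mem_rootsOfUnity _ _).mp (kummerChar_mem_rootsOfUnity hx τ),
        Units.val_one]
  have hτ : τ x = kummerChar τ x * x := by rw [kummerChar_apply, div_mul_cancel₀ _ x.ne_zero]
  ext
  rw [Units.val_mul, kummerChar_apply, kummerChar_apply, AlgEquiv.mul_apply, hτ, map_mul, hfix,
    kummerChar_apply]
  ring

def kummerHom (x : Kˣ) (hx : (x : K) ^ n ∈ (⊥ : IntermediateField F K)) :
    (K ≃ₐ[F] K) →* rootsOfUnity n K where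
  toFun σ := ⟨kummerChar σ x, kummerChar_mem_rootsOfUnity hx σ⟩
  map_one' := Subtype.ext <| kummerChar_eq_one_iff.mpr rfl
  map_mul' σ τ := Subtype.ext <| kummerChar_mul hζ hx σ τ

variable (hα : ∀ i, (α i : K) ^ n ∈ (⊥ : IntermediateField F K))
include hα

theorem isGalois_of_adjoin_eq_top [Finite ι]
    (hgen : adjoin F (Set.range fun i => (α i : K)) = ⊤) : IsGalois F K := by
  set E := adjoin F (Set.range fun i => (α i : K))
  have := finiteDimensional_adjoin_range hα
  rw [← isGalois_iff_isGalois_top, ← hgen, isGalois_iff]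
  have hradical (i : ι) : ∃ c : F, c ≠ 0 ∧ minpoly F (α i : K) ∣ X ^ n - C c ∧
      (⟨α i, subset_adjoin F _ ⟨i, rfl⟩⟩ : E) ^ n = algebraMap F E c := by
    obtain ⟨c, hc⟩ := mem_bot.mp (hα i)
    refine ⟨c, ?_, minpoly.dvd F _ (by simp [hc]), Subtype.ext (by simp [hc])⟩
    rintro rfl
    exact pow_ne_zero n (α i).ne_zero (by simpa using hc.symm)
  constructor
  · refine (isSeparable_adjoin_iff_isSeparable F K).mpr ?_
    rintro _ ⟨i, rfl⟩
    obtain ⟨c, hc0, hdvd, -⟩ := hradical i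
    exact (separable_X_pow_sub_C c hζ.neZero'.out hc0).of_dvd hdvd
  · refine normal_iff.mpr fun x => ⟨.of_finite F x, ?_⟩
    rw [minpoly_eq]
    refine splits_of_mem_adjoin F K ?_ x.2
    rintro _ ⟨i, rfl⟩
    obtain ⟨c, -, hdvd, hroot⟩ := hradical i
    refine ⟨isIntegral_of_pow_mem_bot (hα i), Splits.of_dvd (X_pow_sub_C_splits_of_isPrimitiveRoot
      (hζ.map_of_injective (algebraMap F E).injective) hroot)
      (X_pow_sub_C_ne_zero (NeZero.pos n) _) ?_⟩
    simpa using Polynomial.map_dvd (algebraMap F E) hdvd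

def kummerMap : (K ≃ₐ[F] K) →* (ι → rootsOfUnity n K) :=
  MonoidHom.pi fun i => kummerHom hζ (α i) (hα i)

lemma kummerMap_apply_coe (σ : K ≃ₐ[F] K) (i : ι) :
    ((kummerMap hζ hα σ i : Kˣ) : K) = σ (α i) / α i :=
  kummerChar_apply σ (α i)

lemma kummerMap_injective (hgen : adjoin F (Set.range fun i => (α i : K)) = ⊤) :
    Function.Injective (kummerMap hζ hα) := by
  refine (injective_iff_map_eq_one _).mpr fun σ hσ => ?_
  refine AlgEquiv.eq_one_of_forall_apply_eq hgen ?_ ?_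
  · rintro _ ⟨i, rfl⟩
    exact (isIntegral_of_pow_mem_bot (hα i)).isAlgebraic
  · rintro _ ⟨i, rfl⟩
    exact kummerChar_eq_one_iff.mp (congrArg Subtype.val (congrFun hσ i))

variable [Fintype ι]

/-- Dedekind's lemma applied to the characters `σ ↦ σ(αᵛ) / αᵛ`, `v ∈ [0, n)^ι`. -/
lemma card_pi_fin_le_card_algEquiv [IsGalois F K] [FiniteDimensional F K]
    (hind : IsKummerIndependent F n α) : Nat.card (ι → Fin n) ≤ Nat.card (K ≃ₐ[F] K) := by
  let θ (v : ι → Fin n) : (K ≃ₐ[F] K) →* K := (Units.coeHom K).comp <|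
    (rootsOfUnity n K).subtype.comp (kummerHom hζ _ (prod_zpow_pow_mem_bot hα fun i => v i))
  have hθ : Function.Injective θ := fun v w hvw => funext fun i => Fin.ext <| by
    have hdvd := dvd_sub_of_forall_kummerChar_prod_eq hind
      (fun σ => Units.ext (DFunLike.congr_fun hvw σ)) i
    exact ((Nat.modEq_iff_dvd.mpr hdvd).eq_of_lt_of_lt (w i).isLt (v i).isLt).symm
  classical
  have := ((linearIndependent_monoidHom (K ≃ₐ[F] K) K).comp θ hθ).fintype_card_le_finrank
  simpa [Module.finrank_fintype_fun_eq_card, Nat.card_eq_fintype_card] using this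

theorem kummerMap_bijective (hgen : adjoin F (Set.range fun i => (α i : K)) = ⊤)
    (hind : IsKummerIndependent F n α) : Function.Bijective (kummerMap hζ hα) := by
  have := finiteDimensional_of_adjoin_eq_top hα hgen
  have := isGalois_of_adjoin_eq_top hζ hα hgen
  have hinj := kummerMap_injective hζ hα hgen
  have hcard : Nat.card (rootsOfUnity n K) = n :=
    (hζ.map_of_injective (algebraMap F K).injective).card_rootsOfUnity
  refine (Nat.bijective_iff_injective_and_card _).mpr
    ⟨hinj, le_antisymm (Nat.card_le_card_of_injective _ hinj) ?_⟩
  calc Nat.card (ι → rootsOfUnity n K) = Nat.card (ι → Fin n) := by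
        simp only [Nat.card_pi, hcard, Nat.card_eq_fintype_card, Fintype.card_fin]
    _ ≤ _ := card_pi_fin_le_card_algEquiv hζ hα hind

theorem nonempty_algEquiv_mulEquiv_pi_zmod (hgen : adjoin F (Set.range fun i => (α i : K)) = ⊤)
    (hind : IsKummerIndependent F n α) :
    Nonempty ((K ≃ₐ[F] K) ≃* (ι → Multiplicative (ZMod n))) := by
  have hcard : Nat.card (rootsOfUnity n K) = Nat.card (Multiplicative (ZMod n)) := by
    rw [(hζ.map_of_injective (algebraMap F K).injective).card_rootsOfUnity,
      Nat.card_eq_fintype_card, Fintype.card_multiplicative, ZMod.card]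
  exact ⟨(MulEquiv.ofBijective _ (kummerMap_bijective hζ hα hgen hind)).trans
    (MulEquiv.piCongrRight fun _ => mulEquivOfCyclicCardEq hcard)⟩

theorem exists_algEquiv_apply_eq (hgen : adjoin F (Set.range fun i => (α i : K)) = ⊤)
    (hind : IsKummerIndependent F n α) {β : ι → K} (hβ : ∀ i, β i ^ n = (α i : K) ^ n) :
    ∃ σ : K ≃ₐ[F] K, ∀ i, σ (α i) = β i := by
  have hρ (i : ι) : (β i / α i) ^ n = 1 := by
    rw [div_pow, hβ, div_self (pow_ne_zero _ (α i).ne_zero)]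
  obtain ⟨σ, hσ⟩ := (kummerMap_bijective hζ hα hgen hind).surjective
    fun i => rootsOfUnity.mkOfPowEq _ (hρ i)
  refine ⟨σ, fun i => ?_⟩
  have := congrArg (fun ρ : rootsOfUnity n K => ((ρ : Kˣ) : K)) (congrFun hσ i)
  rw [kummerMap_apply_coe, rootsOfUnity.val_mkOfPowEq_coe] at this
  rwa [← div_left_inj' (α i).ne_zero]

end Kummer

section Adjoin

variable {F L : Type*} [Field F] [Field L] [Algebra F L] {ι : Type*}

lemma IntermediateField.adjoin_range_subtype_eq_top (α : ι → L) :
    adjoin F (Set.range fun i => (⟨α i, subset_adjoin F _ (Set.mem_range_self i)⟩ :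
      adjoin F (Set.range α))) = ⊤ := by
  apply lift_injective
  rw [lift_adjoin, lift_top, ← Set.range_comp]
  rfl

variable {n : ℕ} [NeZero n] {ζ : F} (hζ : IsPrimitiveRoot ζ n)
include hζ

lemma IntermediateField.mem_of_pow_eq_pow (E : IntermediateField F L) {x y : L} (hy : y ∈ E)
    (h : x ^ n = y ^ n) : x ∈ E := by
  rcases eq_or_ne y 0 with rfl | hy0
  · rw [zero_pow (NeZero.ne n), pow_eq_zero_iff (NeZero.ne n)] at h
    exact h ▸ zero_mem E
  obtain ⟨k, -, hk⟩ := (hζ.map_of_injective (algebraMap F L).injective).eq_pow_of_pow_eq_one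
    (by rw [div_pow, h, div_self (pow_ne_zero n hy0)] : (x / y) ^ n = 1)
  rw [← div_mul_cancel₀ x hy0, ← hk, ← map_pow]
  exact mul_mem (E.algebraMap_mem _) hy

lemma IntermediateField.adjoin_range_union_eq {α β : ι → L} (h : ∀ i, β i ^ n = α i ^ n) :
    adjoin F (Set.range α ∪ Set.range β) = adjoin F (Set.range α) := by
  refine le_antisymm (adjoin_le_iff.mpr (Set.union_subset (subset_adjoin F _) ?_))
    (adjoin.mono F _ _ Set.subset_union_left)
  exact Set.range_subset_iff.mpr fun i =>
    mem_of_pow_eq_pow hζ _ (subset_adjoin F _ (Set.mem_range_self i)) (h i)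

end Adjoin

lemma IntermediateField.mem_bot_iff_coe_mem {L : Type*} [Field L] {F : Subfield L}
    {E : IntermediateField F L} {x : E} : x ∈ (⊥ : IntermediateField F E) ↔ (x : L) ∈ F := by
  rw [mem_bot]
  exact ⟨fun ⟨c, hc⟩ => hc ▸ c.2, fun hx => ⟨⟨x, hx⟩, rfl⟩⟩

lemma SF_eq_toSubfield_adjoin (R : Subfield ℂ) (s : Set ℂ) :
    SF R s = (adjoin R s).toSubfield := by
  rw [SF, adjoin_toSubfield]
  congr
  exact Subtype.range_coe.symm

def galFixMulEquiv (R : Subfield ℂ) (E : IntermediateField R ℂ) :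
    galFix R E.toSubfield ≃* (E ≃ₐ[R] E) where
  toFun σ := AlgEquiv.ofRingEquiv (f := σ.1) fun c => σ.2 _ c.2
  invFun σ := ⟨(σ : E ≃+* E), fun x hx => σ.commutes ⟨x, hx⟩⟩
  left_inv _ := rfl
  right_inv _ := rfl
  map_mul' _ _ := rfl

lemma IsSimpleIn.dvd_of_prod_zpow_mem {k n : ℕ} (hn : 0 < n) {R : Subfield ℂ} {a : Fin k → ℂˣ}
    (hs : IsSimpleIn R a) {β : Fin k → ℂ} (hβ : ∀ i, β i ^ n = a i) {v : Fin k → ℤ}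
    (hv : ∏ i, β i ^ v i ∈ R) (i : Fin k) : (n : ℤ) ∣ v i := by
  obtain ⟨-, hind, hpure⟩ := hs
  have hβ0 (i : Fin k) : β i ≠ 0 := fun h => (a i).ne_zero (by rw [← hβ, h, zero_pow hn.ne'])
  set x : ℂˣ := Units.mk0 _ (Finset.prod_ne_zero_iff.mpr fun i _ => zpow_ne_zero (v i) (hβ0 i))
  have hx : x ^ n = ∏ i, a i ^ v i := by
    ext
    rw [Units.val_pow_eq_pow_val, Units.val_mk0, Units.coe_prod, ← Finset.prod_pow]
    refine Finset.prod_congr rfl fun i _ => ?_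
    rw [Units.val_zpow_eq_zpow_val, ← hβ, ← zpow_natCast, ← zpow_natCast, ← zpow_mul,
      ← zpow_mul, mul_comm]
  obtain ⟨y, hy, hyn⟩ := hpure n hn _ (Subgroup.prod_mem _ fun i _ =>
    zpow_mem (Subgroup.subset_closure (Set.mem_range_self i)) _) ⟨x, hv, hx⟩
  obtain ⟨c, rfl⟩ := Subgroup.mem_closure_range_iff_of_fintype.mp hy
  have hprod : ∏ i, a i ^ (v i - n * c i) = (∏ i, a i ^ v i) / (∏ i, a i ^ c i) ^ n := by
    rw [← Finset.prod_pow, ← Finset.prod_div_distrib]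
    refine Finset.prod_congr rfl fun i _ => ?_
    rw [zpow_sub, ← zpow_natCast (a i ^ c i), ← zpow_mul, mul_comm (c i), div_eq_mul_inv]
  rw [hyn, div_self'] at hprod
  exact ⟨c i, by linarith [hind _ hprod i]⟩

lemma IsSimpleIn.isKummerIndependent {k n : ℕ} (hn : 0 < n) {R : Subfield ℂ} {a : Fin k → ℂˣ}
    (hs : IsSimpleIn R a) {E : IntermediateField R ℂ} {u : Fin k → Eˣ}
    (hu : ∀ i, ((u i : E) : ℂ) ^ n = a i) : IsKummerIndependent R n u := fun v hv => by
  have hvR := mem_bot_iff_coe_mem.mp hv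
  simp only [Units.coe_prod, Units.val_zpow_eq_zpow_val, IntermediateField.coe_prod] at hvR
  exact hs.dvd_of_prod_zpow_mem hn hu hvR

/-- If `R ⊆ ℂ` contains a primitive `n`-th root of unity, `{a₁,…,a_r}`
is simple in `R` and `αᵢⁿ = aᵢ`, then the Galois group of `R(α₁,…,α_r)` over `R` is
isomorphic to `(ℤ/nℤ)^r`; in particular any other system of `n`-th roots `α'ᵢ` of the
`aᵢ` is conjugate to `(α₁,…,α_r)` over `R`. -/
theorem kummer_galois_group
    (R : Subfield ℂ) (n : ℕ) (hn : 0 < n)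
    (ζ : ℂ) (hζR : ζ ∈ R) (hζ : IsPrimitiveRoot ζ n)
    (r : ℕ) (a : Fin r → ℂˣ) (hsimple : IsSimpleIn R a)
    (α : Fin r → ℂ) (hα : ∀ i, α i ^ n = (a i : ℂ)) :
    Nonempty (↥(galFix R (SF R (Set.range α))) ≃*
      (Fin r → Multiplicative (ZMod n))) ∧
    ∀ α' : Fin r → ℂ, (∀ i, α' i ^ n = (a i : ℂ)) →
      ∃ σ : ↥(SF R (Set.range α ∪ Set.range α')) ≃+* ↥(SF R (Set.range α ∪ Set.range α')),
        (∀ x : ↥(SF R (Set.range α ∪ Set.range α')), (x : ℂ) ∈ R → σ x = x) ∧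
        ∀ i, ∀ x : ↥(SF R (Set.range α ∪ Set.range α')),
          (x : ℂ) = α i → ((σ x : ↥(SF R (Set.range α ∪ Set.range α'))) : ℂ) = α' i := by
  have : NeZero n := ⟨hn.ne'⟩
  set E := adjoin R (Set.range α)
  have hζ' : IsPrimitiveRoot (⟨ζ, hζR⟩ : R) n := IsPrimitiveRoot.coe_submonoidClass_iff.mp hζ
  have hα0 (i : Fin r) : α i ≠ 0 := fun h => (a i).ne_zero (by rw [← hα, h, zero_pow hn.ne'])
  let u (i : Fin r) : Eˣ := Units.mk0 ⟨α i, subset_adjoin R _ (Set.mem_range_self i)⟩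
    (Subtype.coe_ne_coe.mp (hα0 i))
  have hpow (i : Fin r) : (u i : E) ^ n ∈ (⊥ : IntermediateField R E) :=
    mem_bot_iff_coe_mem.mpr (by simpa [u, hα] using hsimple.1 i)
  have hgen : adjoin R (Set.range fun i => (u i : E)) = ⊤ := adjoin_range_subtype_eq_top α
  have hind : IsKummerIndependent R n u := hsimple.isKummerIndependent hn hα
  refine ⟨?_, fun α' hα' => ?_⟩
  · obtain ⟨e⟩ := nonempty_algEquiv_mulEquiv_pi_zmod hζ' hpow hgen hind
    rw [SF_eq_toSubfield_adjoin]
    exact ⟨(galFixMulEquiv R E).trans e⟩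
  · have hαα' (i : Fin r) : α' i ^ n = α i ^ n := by rw [hα, hα']
    obtain ⟨σ, hσ⟩ := exists_algEquiv_apply_eq hζ' hpow hgen hind
      (β := fun i => ⟨α' i, mem_of_pow_eq_pow hζ' E (subset_adjoin R _ ⟨i, rfl⟩) (hαα' i)⟩)
      fun i => Subtype.ext (hαα' i)
    rw [SF_eq_toSubfield_adjoin, adjoin_range_union_eq hζ' hαα']
    refine ⟨(galFixMulEquiv R E).symm σ, ((galFixMulEquiv R E).symm σ).2, fun i x hx => ?_⟩
    obtain rfl : x = u i := Subtype.ext hx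
    exact congrArg Subtype.val (hσ i)
end
end

section
/- Let F be an algebraically closed field of characteristic 0 and let Ẑ denote the profinite completion of ℤ (equivalently, the product over all primes p of the p-adic integers ℤ_p, as an additive group). Suppose 0 → Ẑ →(i_H) H →(ex_H) F^× → 1 and 0 → Ẑ →(i_G) G →(ex_G) F^× → 1 are exact sequences of abelian groups in which both H and G are divisible and torsion-free. Then there exists a group isomorphism σ : H → G such that ex_H = ex_G ∘ σ. -/
/-!
A divisible torsion-free group is a `ℚ`-vector space, so it suffices to lift `exH` through `exG`
and `exG` through `exH`. The two lifts are mutually inverse: two lifts of the same map differ by a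
homomorphism from a divisible group into `Ẑ`, and `Ẑ` has no nonzero divisible elements.

To lift `f : ℚ →+ T` through `e : G →+ T`, call `g` good at `n` (`IsLiftAtInv`) if
`e (g / n) = f (1 / n)`. Elements good at `n` exist, form a coset of `i (n • Ẑ)` and are good at
every divisor of `n`, so a choice of one for each `n` gives a compatible system of congruences in
`Ẑ`. Its solution (a `p`-adic limit for each prime `p`) yields one `g` good at every `n`, and
`q ↦ q • g` lifts `f`. A `ℚ`-basis extends this to maps out of any `ℚ`-vector space.
-/

noncomputable section

instance (p : Nat.Primes) : Fact (p : ℕ).Prime := ⟨p.2⟩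

/-- The profinite completion of `ℤ`, realized as the product over all primes `p` of the
`p`-adic integers, as an additive group. -/
def Zhat : Type := Π p : Nat.Primes, ℤ_[p]

instance : AddCommGroup Zhat := by unfold Zhat; infer_instance

open IsLocalRing

namespace PadicInt

variable {p : ℕ} [Fact p.Prime]

theorem sModEq_maximalIdeal_pow_iff {x y : ℤ_[p]} {n : ℕ} :
    x ≡ y [SMOD (maximalIdeal ℤ_[p] ^ n • ⊤ : Ideal ℤ_[p])] ↔ (p : ℤ_[p]) ^ n ∣ x - y := by
  rw [SModEq.sub_mem, smul_eq_mul, Ideal.mul_top, maximalIdeal_eq_span_p,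
    Ideal.span_singleton_pow, Ideal.mem_span_singleton]

theorem exists_forall_pow_dvd_sub {a : ℕ → ℤ_[p]}
    (ha : ∀ {m n : ℕ}, m ≤ n → (p : ℤ_[p]) ^ m ∣ a n - a m) :
    ∃ l : ℤ_[p], ∀ n, (p : ℤ_[p]) ^ n ∣ l - a n := by
  obtain ⟨l, hl⟩ := IsPrecomplete.prec inferInstance (I := maximalIdeal ℤ_[p])
    fun hmn => (sModEq_maximalIdeal_pow_iff.mpr (ha hmn)).symm
  exact ⟨l, fun n => sModEq_maximalIdeal_pow_iff.mp (hl n).symm⟩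

theorem eq_zero_of_forall_pow_dvd {x : ℤ_[p]} (h : ∀ n, (p : ℤ_[p]) ^ n ∣ x) : x = 0 :=
  IsHausdorff.haus inferInstance (I := maximalIdeal ℤ_[p]) x
    fun n => sModEq_maximalIdeal_pow_iff.mpr (by simpa using h n)

theorem natCast_dvd_of_pow_factorization_dvd {n : ℕ} (hn : n ≠ 0) {x : ℤ_[p]}
    (h : (p : ℤ_[p]) ^ n.factorization p ∣ x) : (n : ℤ_[p]) ∣ x := by
  have hunit : IsUnit ((n / p ^ n.factorization p : ℕ) : ℤ_[p]) := by
    rw [isUnit_iff, norm_natCast_eq_one_iff]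
    exact Nat.coprime_ordCompl Fact.out hn
  rw [← Nat.ordProj_mul_ordCompl_eq_self n p, Nat.cast_mul, Nat.cast_pow]
  exact hunit.mul_right_dvd.mpr h

end PadicInt

namespace Zhat

@[simp]
theorem sub_apply (u v : Zhat) (p : Nat.Primes) : (u - v) p = u p - v p := rfl

@[simp]
theorem nsmul_apply (n : ℕ) (w : Zhat) (p : Nat.Primes) : (n • w) p = n * w p :=
  nsmul_eq_mul n (w p)

theorem exists_eq_nsmul_iff {n : ℕ} {z : Zhat} :
    (∃ w : Zhat, z = n • w) ↔ ∀ p : Nat.Primes, (n : ℤ_[p]) ∣ z p := by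
  constructor
  · rintro ⟨w, rfl⟩ p
    exact ⟨w p, nsmul_apply n w p⟩
  · intro h
    choose w hw using h
    exact ⟨w, funext fun p => (hw p).trans (nsmul_apply n w p).symm⟩

theorem eq_zero_of_forall_exists_eq_nsmul {z : Zhat} (h : ∀ n : ℕ, 0 < n → ∃ w, z = n • w) :
    z = 0 :=
  funext fun p => PadicInt.eq_zero_of_forall_pow_dvd fun k => by
    simpa using exists_eq_nsmul_iff.mp (h (p ^ k) (pow_pos p.2.pos k)) p

theorem exists_forall_sub_eq_nsmul {z : ℕ → Zhat}
    (hz : ∀ {m n : ℕ}, 0 < n → m ∣ n → ∃ w, z n - z m = m • w) :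
    ∃ u : Zhat, ∀ n : ℕ, 0 < n → ∃ w, u - z n = n • w := by
  have hlim (p : Nat.Primes) : ∃ l : ℤ_[p], ∀ k, (p : ℤ_[p]) ^ k ∣ l - z (p ^ k) p :=
    PadicInt.exists_forall_pow_dvd_sub fun hmn => by
      simpa using exists_eq_nsmul_iff.mp (hz (pow_pos p.2.pos _) (pow_dvd_pow _ hmn)) p
  choose u hu using hlim
  refine ⟨u, fun n hn => exists_eq_nsmul_iff.mpr fun p =>
    PadicInt.natCast_dvd_of_pow_factorization_dvd hn.ne' ?_⟩
  have hzn : (p : ℤ_[p]) ^ n.factorization p ∣ z n p - z (p ^ n.factorization p) p := by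
    simpa using exists_eq_nsmul_iff.mp (hz hn (Nat.ordProj_dvd n p)) p
  have hsplit : u p - z n p = (u p - z (p ^ n.factorization p) p)
      - (z n p - z (p ^ n.factorization p) p) := by ring
  change _ ∣ u p - z n p
  rw [hsplit]
  exact dvd_sub (hu p _) hzn

end Zhat

section RatModule

variable {M : Type*} [AddCommGroup M]

theorem bijective_zsmul_of_divisible_of_torsionFree
    (hdiv : ∀ n : ℕ, 0 < n → ∀ y : M, ∃ x : M, n • x = y)
    (htf : ∀ (n : ℕ) (x : M), 0 < n → n • x = 0 → x = 0) {z : ℤ} (hz : z ≠ 0) :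
    Function.Bijective fun x : M => z • x := by
  have : IsAddTorsionFree M := ⟨fun n hn x y hxy =>
    sub_eq_zero.mp (htf n _ (Nat.pos_of_ne_zero hn) (by simp only [nsmul_sub, hxy, sub_self]))⟩
  refine ⟨zsmul_right_injective hz, fun y => ?_⟩
  obtain ⟨x, hx⟩ := hdiv z.natAbs (Int.natAbs_pos.mpr hz) y
  rcases Int.natAbs_eq z with hz' | hz'
  · exact ⟨x, by dsimp only; rw [hz', natCast_zsmul, hx]⟩
  · exact ⟨-x, by dsimp only; rw [hz', smul_neg, neg_smul, neg_neg, natCast_zsmul, hx]⟩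

@[reducible]
def moduleRatOfDivisibleOfTorsionFree
    (hdiv : ∀ n : ℕ, 0 < n → ∀ y : M, ∃ x : M, n • x = y)
    (htf : ∀ (n : ℕ) (x : M), 0 < n → n • x = 0 → x = 0) : Module ℚ M :=
  haveI : IsLocalizedModule (nonZeroDivisors ℤ) (LinearMap.id : M →ₗ[ℤ] M) :=
    { map_units := fun s => (Module.End.isUnit_iff _).mpr
        (bijective_zsmul_of_divisible_of_torsionFree hdiv htf (nonZeroDivisors.ne_zero s.2))
      surj := fun y => ⟨(y, 1), one_smul _ y⟩
      exists_of_eq := fun h => ⟨1, congrArg _ h⟩ }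
  IsLocalizedModule.module (nonZeroDivisors ℤ) (LinearMap.id : M →ₗ[ℤ] M)

end RatModule

section Lift

variable {K G T : Type*} [AddCommGroup K] [AddCommGroup G] [Module ℚ G] [AddCommGroup T]

def IsLiftAtInv (e : G →+ T) (f : ℚ →+ T) (n : ℕ) (g : G) : Prop :=
  e ((n : ℚ)⁻¹ • g) = f (n : ℚ)⁻¹

variable {i : K →+ G} {e : G →+ T} {f : ℚ →+ T} {n : ℕ} {g g' : G}

theorem exists_isLiftAtInv (he : Function.Surjective e) (f : ℚ →+ T) (n : ℕ) :
    ∃ g, IsLiftAtInv e f n g := by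
  rcases n.eq_zero_or_pos with rfl | hn
  · exact ⟨0, by simp [IsLiftAtInv]⟩
  obtain ⟨y, hy⟩ := he (f (n : ℚ)⁻¹)
  refine ⟨n • y, ?_⟩
  rw [IsLiftAtInv, ← Nat.cast_smul_eq_nsmul ℚ, smul_smul, inv_mul_cancel₀ (by positivity),
    one_smul, hy]

theorem IsLiftAtInv.of_dvd {m : ℕ} (hg : IsLiftAtInv e f n g) (hn : n ≠ 0) (hmn : m ∣ n) :
    IsLiftAtInv e f m g := by
  obtain ⟨c, rfl⟩ := hmn
  have hinv : (m : ℚ)⁻¹ = c • ((m * c : ℕ) : ℚ)⁻¹ := by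
    have : (m : ℚ) ≠ 0 ∧ (c : ℚ) ≠ 0 := by exact_mod_cast mul_ne_zero_iff.mp hn
    rw [nsmul_eq_mul]; push_cast; field_simp [this.1, this.2]
  rw [IsLiftAtInv, hinv, smul_assoc, map_nsmul, hg, map_nsmul]

theorem IsLiftAtInv.exists_sub_eq (hexact : Function.Exact i e) (hn : n ≠ 0)
    (hg : IsLiftAtInv e f n g) (hg' : IsLiftAtInv e f n g') : ∃ w, g - g' = i (n • w) := by
  obtain ⟨w, hw⟩ := (hexact ((n : ℚ)⁻¹ • (g - g'))).mp
    (by rw [smul_sub, map_sub, hg, hg', sub_self])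
  refine ⟨w, ?_⟩
  rw [map_nsmul, hw, ← Nat.cast_smul_eq_nsmul ℚ, smul_smul, mul_inv_cancel₀ (by positivity),
    one_smul]

theorem IsLiftAtInv.add_nsmul (hexact : Function.Exact i e) (hn : n ≠ 0)
    (hg : IsLiftAtInv e f n g) (w : K) : IsLiftAtInv e f n (g + i (n • w)) := by
  rw [IsLiftAtInv, map_nsmul, smul_add, ← Nat.cast_smul_eq_nsmul ℚ, smul_smul,
    inv_mul_cancel₀ (by positivity), one_smul, map_add, hexact.apply_apply_eq_zero, add_zero, hg]

theorem map_smul_of_forall_isLiftAtInv (h : ∀ n, 0 < n → IsLiftAtInv e f n g) (q : ℚ) :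
    e (q • g) = f q := by
  have hq : q = q.num • ((q.den : ℚ)⁻¹) := by
    rw [zsmul_eq_mul, ← div_eq_mul_inv, Rat.num_div_den]
  rw [hq, smul_assoc, map_zsmul, h q.den q.pos, map_zsmul]

theorem exists_lift_rat_of_exact {i : Zhat →+ G} {e : G →+ T} (hi : Function.Injective i)
    (he : Function.Surjective e) (hexact : Function.Exact i e) (f : ℚ →+ T) :
    ∃ g : G, ∀ q : ℚ, e (q • g) = f q := by
  choose g hg using exists_isLiftAtInv he f
  have hz (n : ℕ) : ∃ z, 0 < n → g n - g 1 = i z := by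
    rcases n.eq_zero_or_pos with rfl | hn
    · exact ⟨0, by simp⟩
    obtain ⟨w, hw⟩ := ((hg n).of_dvd hn.ne' (one_dvd n)).exists_sub_eq hexact one_ne_zero (hg 1)
    exact ⟨w, fun _ => by rwa [one_smul] at hw⟩
  choose z hz using hz
  have hcompat {m n : ℕ} (hn : 0 < n) (hmn : m ∣ n) : ∃ w, z n - z m = m • w := by
    have hm := Nat.pos_of_dvd_of_pos hmn hn
    obtain ⟨w, hw⟩ := ((hg n).of_dvd hn.ne' hmn).exists_sub_eq hexact hm.ne' (hg m)
    refine ⟨w, hi ?_⟩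
    rw [map_sub, ← hz n hn, ← hz m hm, ← hw]
    abel
  obtain ⟨u, hu⟩ := Zhat.exists_forall_sub_eq_nsmul hcompat
  refine ⟨g 1 + i u, map_smul_of_forall_isLiftAtInv fun n hn => ?_⟩
  obtain ⟨w, hw⟩ := hu n hn
  have hgu : g 1 + i u = g n + i (n • w) := by
    rw [← hw, map_sub, ← hz n hn]
    abel
  exact hgu ▸ (hg n).add_nsmul hexact hn.ne' w

theorem exists_lift_of_exact {H : Type*} [AddCommGroup H] [Module ℚ H] {i : Zhat →+ G}
    {e : G →+ T} (hi : Function.Injective i) (he : Function.Surjective e)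
    (hexact : Function.Exact i e) (f : H →+ T) : ∃ φ : H →+ G, e.comp φ = f := by
  let B := Module.Basis.ofVectorSpace ℚ H
  choose g hg using fun j =>
    exists_lift_rat_of_exact hi he hexact
      (f.comp (LinearMap.toSpanSingleton ℚ H (B j)).toAddMonoidHom)
  refine ⟨(B.constr ℚ g).toAddMonoidHom, AddMonoidHom.ext fun x => ?_⟩
  conv_rhs => rw [← B.linearCombination_repr x]
  simp [Module.Basis.constr_apply, map_finsuppSum, Finsupp.linearCombination_apply, hg]

end Lift

theorem eq_of_comp_eq_of_exact {H G T : Type*} [AddCommGroup H] [Module ℚ H] [AddCommGroup G]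
    [AddCommGroup T] {i : Zhat →+ G} {e : G →+ T}
    (hi : Function.Injective i) (hexact : Function.Exact i e) {φ ψ : H →+ G}
    (h : e.comp φ = e.comp ψ) : φ = ψ := by
  have hker (x : H) : ∃ z, i z = φ x - ψ x :=
    (hexact _).mp <| by
      rw [map_sub, ← AddMonoidHom.comp_apply, h, AddMonoidHom.comp_apply, sub_self]
  choose z hz using hker
  have hz0 (x : H) : z x = 0 :=
    Zhat.eq_zero_of_forall_exists_eq_nsmul fun n hn => ⟨z ((n : ℚ)⁻¹ • x), hi <| by
      rw [map_nsmul, hz, hz, smul_sub, ← map_nsmul, ← map_nsmul, ← Nat.cast_smul_eq_nsmul ℚ,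
        smul_smul, mul_inv_cancel₀ (by positivity), one_smul]⟩
  exact AddMonoidHom.ext fun x => sub_eq_zero.mp (by rw [← hz, hz0, map_zero])

theorem cover_with_compact_kernel_unique_general
    {F : Type} [Field F]
    {H G : Type} [AddCommGroup H] [AddCommGroup G]
    (hHdiv : ∀ n : ℕ, 0 < n → ∀ h : H, ∃ x : H, n • x = h)
    (hGdiv : ∀ n : ℕ, 0 < n → ∀ g : G, ∃ x : G, n • x = g)
    (hHtf : ∀ (n : ℕ) (x : H), 0 < n → n • x = 0 → x = 0)
    (hGtf : ∀ (n : ℕ) (x : G), 0 < n → n • x = 0 → x = 0)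
    (iH : Zhat →+ H) (exH : H →+ Additive Fˣ)
    (iG : Zhat →+ G) (exG : G →+ Additive Fˣ)
    (hiH : Function.Injective iH) (hexH : Function.Surjective exH)
    (hkerH : ∀ h : H, exH h = 0 ↔ h ∈ Set.range iH)
    (hiG : Function.Injective iG) (hexG : Function.Surjective exG)
    (hkerG : ∀ g : G, exG g = 0 ↔ g ∈ Set.range iG) :
    ∃ σ : H ≃+ G, ∀ h : H, exG (σ h) = exH h := by
  let := moduleRatOfDivisibleOfTorsionFree hHdiv hHtf
  let := moduleRatOfDivisibleOfTorsionFree hGdiv hGtf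
  obtain ⟨φ, hφ⟩ := exists_lift_of_exact hiG hexG hkerG exH
  obtain ⟨ψ, hψ⟩ := exists_lift_of_exact hiH hexH hkerH exG
  have hψφ : ψ.comp φ = .id H :=
    eq_of_comp_eq_of_exact hiH hkerH <| by
      rw [← AddMonoidHom.comp_assoc, hψ, hφ, AddMonoidHom.comp_id]
  have hφψ : φ.comp ψ = .id G :=
    eq_of_comp_eq_of_exact hiG hkerG <| by
      rw [← AddMonoidHom.comp_assoc, hφ, hψ, AddMonoidHom.comp_id]
  exact ⟨φ.toAddEquiv ψ hψφ hφψ, fun x => congrArg (· x) hφ⟩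

/-- If `0 → Ẑ → H → Fˣ → 1` and `0 → Ẑ → G → Fˣ → 1` are exact sequences
of abelian groups with `H`, `G` divisible and torsion-free and `F` an algebraically
closed field of characteristic `0`, then there is a group isomorphism `σ : H ≃ G` with
`ex_H = ex_G ∘ σ`. -/
theorem cover_with_compact_kernel_unique
    {F : Type} [Field F] [IsAlgClosed F] [CharZero F]
    {H G : Type} [AddCommGroup H] [AddCommGroup G]
    (hHdiv : ∀ n : ℕ, 0 < n → ∀ h : H, ∃ x : H, n • x = h)
    (hGdiv : ∀ n : ℕ, 0 < n → ∀ g : G, ∃ x : G, n • x = g)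
    (hHtf : ∀ (n : ℕ) (x : H), 0 < n → n • x = 0 → x = 0)
    (hGtf : ∀ (n : ℕ) (x : G), 0 < n → n • x = 0 → x = 0)
    (iH : Zhat →+ H) (exH : H →+ Additive Fˣ)
    (iG : Zhat →+ G) (exG : G →+ Additive Fˣ)
    (hiH : Function.Injective iH) (hexH : Function.Surjective exH)
    (hkerH : ∀ h : H, exH h = 0 ↔ h ∈ Set.range iH)
    (hiG : Function.Injective iG) (hexG : Function.Surjective exG)
    (hkerG : ∀ g : G, exG g = 0 ↔ g ∈ Set.range iG) :
    ∃ σ : H ≃+ G, ∀ h : H, exG (σ h) = exH h :=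
  cover_with_compact_kernel_unique_general hHdiv hGdiv hHtf hGtf iH exH iG exG hiH hexH hkerH hiG
    hexG hkerG
end
end
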